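/- arXiv:1712.01407 — 5 statements merged into one kernel-verified Lean document; each statement's English description precedes it below -/
import Mathlib

section
/- Let X₁, …, X_s be pairwise disjoint finite sets with |X_i| = n_i, let f_i : X_i → X_i, and let f be the function on X = ⋃ X_i with f(x) = f_i(x) for x ∈ X_i. Then for every positive integer k, the iteration entropy of f is the convex combination H_{f,k} = Σ_{i=1}^{s} (n_i/n) H_{f_i,k}, where n = Σ n_i. -/
open scoped Classical

/-- `itN f k x y` counts the iterates `j < k` with `f^[j] x = y`. -/
noncomputable def itN {X : Type*} (f : X → X) (k : ℕ) (x y : X) : ℕ :=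
  ((Finset.range k).filter (fun j => f^[j] x = y)).card

/-- The (shifted) iteration entropy `H_{f,k}`. -/
noncomputable def itH (X : Type*) [Fintype X] (f : X → X) (k : ℕ) : ℝ :=
  (1 / ((k : ℝ) * (Fintype.card X : ℝ))) *
    ∑ x : X, ∑ y : X, (itN f k x y : ℝ) * Real.logb 2 ((k : ℝ) / (itN f k x y : ℝ))

lemma sigma_iterate {ι : Type*} (X : ι → Type*) (fs : ∀ i, X i → X i) (j : ℕ) (i : ι) (x : X i) :
    (fun p : Σ i, X i => (⟨p.1, fs p.1 p.2⟩ : Σ i, X i))^[j] ⟨i, x⟩ = ⟨i, (fs i)^[j] x⟩ := by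
  induction j generalizing x with
  | zero => simp
  | succ n ih =>
    rw [Function.iterate_succ_apply, Function.iterate_succ_apply]
    exact ih (fs i x)

lemma itN_sigma_eq {ι : Type*} (X : ι → Type*) (fs : ∀ i, X i → X i) (k : ℕ) (i : ι)
    (x y : X i) :
    itN (fun p : Σ i, X i => (⟨p.1, fs p.1 p.2⟩ : Σ i, X i)) k ⟨i, x⟩ ⟨i, y⟩ =
      itN (fs i) k x y := by
  unfold itN
  congr 1
  ext j
  simp [sigma_iterate X fs]

lemma itN_sigma_ne {ι : Type*} (X : ι → Type*) (fs : ∀ i, X i → X i) (k : ℕ) (i i' : ι)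
    (hne : i ≠ i') (x : X i) (y : X i') :
    itN (fun p : Σ i, X i => (⟨p.1, fs p.1 p.2⟩ : Σ i, X i)) k ⟨i, x⟩ ⟨i', y⟩ = 0 := by
  unfold itN
  rw [Finset.card_eq_zero]
  ext j
  simp only [Finset.mem_filter, Finset.notMem_empty, iff_false, not_and]
  intro _
  rw [sigma_iterate X fs]
  intro h
  exact hne (congrArg Sigma.fst h)

theorem itH_combination {ι : Type*} [Fintype ι] (X : ι → Type*) [∀ i, Fintype (X i)]
    (fs : ∀ i, X i → X i) (k : ℕ) (hk : 0 < k) (hn : 0 < Fintype.card (Σ i, X i)) :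
    itH (Σ i, X i) (fun p => ⟨p.1, fs p.1 p.2⟩) k =
      ∑ i : ι, ((Fintype.card (X i) : ℝ) / (Fintype.card (Σ i, X i) : ℝ)) * itH (X i) (fs i) k := by
  classical
  set F : (Σ i, X i) → (Σ i, X i) := fun p => ⟨p.1, fs p.1 p.2⟩ with hF
  have hNpos : (0 : ℝ) < (Fintype.card (Σ i, X i) : ℝ) := by exact_mod_cast hn
  have hkpos : (0 : ℝ) < (k : ℝ) := by exact_mod_cast hk
  have key : ∀ i : ι,
      ∑ x : X i, ∑ y : X i, (itN (fs i) k x y : ℝ) *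
        Real.logb 2 ((k : ℝ) / (itN (fs i) k x y : ℝ)) =
      (k : ℝ) * (Fintype.card (X i) : ℝ) * itH (X i) (fs i) k := by
    intro i
    unfold itH
    by_cases hc : Fintype.card (X i) = 0
    · have : IsEmpty (X i) := Fintype.card_eq_zero_iff.mp hc
      simp [hc]
    · field_simp
  have hsum : ∑ p : Σ i, X i, ∑ q : Σ i, X i, (itN F k p q : ℝ) *
      Real.logb 2 ((k : ℝ) / (itN F k p q : ℝ)) =
      ∑ i : ι, ∑ x : X i, ∑ y : X i, (itN (fs i) k x y : ℝ) *
        Real.logb 2 ((k : ℝ) / (itN (fs i) k x y : ℝ)) := by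
    rw [← Finset.univ_sigma_univ, Finset.sum_sigma]
    apply Finset.sum_congr rfl
    intro i _
    apply Finset.sum_congr rfl
    intro x _
    rw [Finset.sum_sigma]
    rw [Finset.sum_eq_single_of_mem i (Finset.mem_univ i)]
    · apply Finset.sum_congr rfl
      intro y _
      rw [hF, itN_sigma_eq]
    · intro i' _ hne
      apply Finset.sum_eq_zero
      intro y _
      rw [hF, itN_sigma_ne X fs k i i' (Ne.symm hne) x y]
      simp
  unfold itH
  rw [hsum, Finset.mul_sum]
  apply Finset.sum_congr rfl
  intro i _
  rw [key i]
  by_cases hc : Fintype.card (X i) = 0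
  · have : IsEmpty (X i) := Fintype.card_eq_zero_iff.mp hc
    simp [itH, hc]
  · have hcpos : (0 : ℝ) < (Fintype.card (X i) : ℝ) := by
      exact_mod_cast Nat.pos_of_ne_zero hc
    have hS : ((Fintype.card (Σ i, X i)) : ℝ) = ∑ j : ι, (Fintype.card (X j) : ℝ) := by
      rw [Fintype.card_sigma]
      push_cast
      rfl
    rw [hS] at hNpos ⊢
    field_simp
end

section
/- Let f(x) = ax + b on a finite field with n elements, a(a−1) ≠ 0, let ℓ be the multiplicative order of a, and let k = ℓm for a positive integer m. Then the iteration entropy of f is H_{f,k} = (1 − 1/n)·log₂ ℓ. -/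
open scoped Classical

lemma count_mod (L m r : ℕ) (hr : r < L) :
    ((Finset.range (L * m)).filter (fun j => j % L = r)).card = m := by
  have hL : 0 < L := lt_of_le_of_lt (Nat.zero_le r) hr
  have himg : (Finset.range (L * m)).filter (fun j => j % L = r)
      = (Finset.range m).image (fun q => L * q + r) := by
    ext j
    simp only [Finset.mem_filter, Finset.mem_range, Finset.mem_image]
    constructor
    · rintro ⟨hj, hmod⟩
      have h1 : L * (j / L) + j % L = j := Nat.div_add_mod j L
      refine ⟨j / L, ?_, by omega⟩
      have h2 : L * (j / L) < L * m := by omega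
      exact Nat.lt_of_mul_lt_mul_left h2
    · rintro ⟨q, hq, rfl⟩
      refine ⟨?_, ?_⟩
      · calc L * q + r < L * q + L := by omega
          _ = L * (q + 1) := by ring
          _ ≤ L * m := Nat.mul_le_mul_left L hq
      · rw [Nat.mul_add_mod]; exact Nat.mod_eq_of_lt hr
  rw [himg, Finset.card_image_of_injective _ (fun q1 q2 h => by
    have : L * q1 = L * q2 := by omega
    exact Nat.eq_of_mul_eq_mul_left hL this), Finset.card_range]

theorem lcg_itH {X : Type*} [Field X] [Fintype X] (a b : X) (ha : a ≠ 0) (ha1 : a ≠ 1)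
    (m : ℕ) (hm : 0 < m) :
    itH X (fun z => a * z + b) (orderOf a * m) =
      (1 - 1 / (Fintype.card X : ℝ)) * Real.logb 2 (orderOf a) := by
  set f : X → X := fun z => a * z + b with hf
  set L := orderOf a with hL
  set k := L * m with hk
  set n := Fintype.card X with hn
  have h1a : (1 : X) - a ≠ 0 := sub_ne_zero.mpr (Ne.symm ha1)
  set c : X := b / (1 - a) with hc
  have hfix : a * c + b = c := by
    rw [hc]; field_simp; ring
  -- iterate formula
  have hiter : ∀ (j : ℕ) (x : X), f^[j] x = a ^ j * (x - c) + c := by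
    intro j
    induction j with
    | zero => intro x; simp
    | succ j ih =>
      intro x
      rw [Function.iterate_succ_apply', ih x]
      show a * (a ^ j * (x - c) + c) + b = _
      have : a * (a ^ j * (x - c) + c) + b = a ^ (j + 1) * (x - c) + (a * c + b) := by ring
      rw [this, hfix]
  -- order facts
  have hordu : orderOf ((Units.mk0 a ha : Xˣ) : X) = orderOf (Units.mk0 a ha) := orderOf_units
  have horder : orderOf a = orderOf (Units.mk0 a ha) := by
    simpa using hordu
  have hLpos : 0 < L := by
    rw [hL, horder]; exact orderOf_pos _
  have hpow : ∀ i j : ℕ, a ^ i = a ^ j ↔ i % L = j % L := by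
    intro i j
    have h1 : a ^ i = a ^ j ↔ (Units.mk0 a ha) ^ i = (Units.mk0 a ha) ^ j := by
      rw [Units.ext_iff]; push_cast; rfl
    rw [h1, pow_eq_pow_iff_modEq, hL, horder]; rfl
  have hkpos : 0 < k := Nat.mul_pos hLpos hm
  -- the inner sum at the fixed point is 0
  have inner_c : ∑ y : X, (itN f k c y : ℝ) * Real.logb 2 ((k : ℝ) / (itN f k c y : ℝ)) = 0 := by
    apply Finset.sum_eq_zero
    intro y _
    by_cases hy : y = c
    · subst hy
      have hN : itN f k c c = k := by
        unfold itN
        rw [Finset.filter_true_of_mem, Finset.card_range]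
        intro j _
        rw [hiter]; ring
      rw [hN]
      have : (k : ℝ) / (k : ℝ) = 1 := div_self (by positivity)
      rw [this, Real.logb_one, mul_zero]
    · have hN : itN f k c y = 0 := by
        unfold itN
        rw [Finset.card_eq_zero, Finset.filter_eq_empty_iff]
        intro j _
        rw [hiter]
        intro h
        apply hy
        rw [← h]; ring
      rw [hN]; push_cast; ring
  -- the inner sum for x ≠ c
  have inner_x : ∀ x : X, x ≠ c →
      ∑ y : X, (itN f k x y : ℝ) * Real.logb 2 ((k : ℝ) / (itN f k x y : ℝ))
        = (k : ℝ) * Real.logb 2 (L : ℝ) := by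
    intro x hxc
    have hx : x - c ≠ 0 := sub_ne_zero.mpr hxc
    have hiff : ∀ i j : ℕ, f^[j] x = f^[i] x ↔ j % L = i % L := by
      intro i j
      rw [hiter, hiter]
      constructor
      · intro h
        have h2 : a ^ j * (x - c) = a ^ i * (x - c) := by
          have := add_right_cancel h; exact this
        exact (hpow j i).mp (mul_right_cancel₀ hx h2)
      · intro h
        rw [(hpow j i).mpr h]
    have hNval : ∀ i : ℕ, itN f k x (f^[i] x) = m := by
      intro i
      unfold itN
      rw [Finset.filter_congr (fun j _ => by rw [hiff i j])]
      exact count_mod L m (i % L) (Nat.mod_lt _ hLpos)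
    set O : Finset X := (Finset.range L).image (fun j => f^[j] x) with hO
    have hcard : O.card = L := by
      rw [hO, Finset.card_image_of_injOn, Finset.card_range]
      intro j1 h1 j2 h2 heq
      have := (hiff j2 j1).mp heq
      rw [Nat.mod_eq_of_lt (Finset.mem_range.mp h1),
        Nat.mod_eq_of_lt (Finset.mem_range.mp h2)] at this
      exact this
    have hNzero : ∀ y : X, y ∉ O → itN f k x y = 0 := by
      intro y hy
      unfold itN
      rw [Finset.card_eq_zero, Finset.filter_eq_empty_iff]
      intro j _ heq
      apply hy
      rw [hO, Finset.mem_image]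
      refine ⟨j % L, Finset.mem_range.mpr (Nat.mod_lt _ hLpos), ?_⟩
      rw [← heq]
      exact (hiff j (j % L)).mpr (Nat.mod_mod_of_dvd j dvd_rfl)
    have hsub : ∑ y : X, (itN f k x y : ℝ) * Real.logb 2 ((k : ℝ) / (itN f k x y : ℝ))
        = ∑ y ∈ O, (itN f k x y : ℝ) * Real.logb 2 ((k : ℝ) / (itN f k x y : ℝ)) := by
      refine (Finset.sum_subset (Finset.subset_univ O) ?_).symm
      intro y _ hy
      rw [hNzero y hy]; push_cast; ring
    rw [hsub]
    have hterm : ∀ y ∈ O, (itN f k x y : ℝ) * Real.logb 2 ((k : ℝ) / (itN f k x y : ℝ))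
        = (m : ℝ) * Real.logb 2 (L : ℝ) := by
      intro y hy
      obtain ⟨i, -, rfl⟩ := Finset.mem_image.mp hy
      rw [hNval i]
      congr 2
      rw [hk]
      push_cast
      field_simp
    rw [Finset.sum_congr rfl hterm, Finset.sum_const, hcard, nsmul_eq_mul, hk]
    push_cast
    ring
  -- assemble
  unfold itH
  rw [← hn]
  have hsum : ∑ x : X, ∑ y : X, (itN f k x y : ℝ) * Real.logb 2 ((k : ℝ) / (itN f k x y : ℝ))
      = ((n : ℝ) - 1) * ((k : ℝ) * Real.logb 2 (L : ℝ)) := by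
    rw [← Finset.sum_erase_add _ _ (Finset.mem_univ c), inner_c, add_zero]
    rw [Finset.sum_congr rfl (fun x hx => inner_x x (Finset.ne_of_mem_erase hx)),
      Finset.sum_const, nsmul_eq_mul, Finset.card_erase_of_mem (Finset.mem_univ c),
      Finset.card_univ, ← hn]
    congr 1
    have : 1 ≤ n := Fintype.card_pos
    push_cast [Nat.cast_sub this]
    ring
  rw [hsum]
  have hk0 : (k : ℝ) ≠ 0 := by positivity
  have hn0 : (n : ℝ) ≠ 0 := by
    have : 0 < n := Fintype.card_pos
    positivity
  field_simp
end

section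
/- If f is a permutation of a finite set X with n elements and k is a positive integer multiple of the order lcm(c₁,…,c_s) of f (where c_i are the cycle lengths), then the iteration entropy equals the asymptotic iteration entropy: H_{f,k} = H_{f,∞} = (1/n) Σ c_i log₂ c_i. -/
open scoped Classical

theorem itH_perm_order_dvd {X : Type*} [Fintype X] (hn : 0 < Fintype.card X)
    (f : Equiv.Perm X) (k : ℕ) (hk : 0 < k) (hdvd : orderOf f ∣ k) :
    itH X (⇑f) k =
      (1 / (Fintype.card X : ℝ)) *
        ∑ x : X, Real.logb 2 (Function.minimalPeriod (⇑f) x) := by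
  have hfk : f ^ k = 1 := orderOf_dvd_iff_pow_eq_one.mp hdvd
  have hfix : ∀ x : X, Function.IsPeriodicPt (⇑f) k x := by
    intro x
    show f^[k] x = x
    rw [Equiv.Perm.iterate_eq_pow, hfk]; rfl
  set c : X → ℕ := fun x => Function.minimalPeriod (⇑f) x with hc
  have hcpos : ∀ x, 0 < c x := fun x => (hfix x).minimalPeriod_pos hk
  have hcdvd : ∀ x, c x ∣ k := fun x => (hfix x).minimalPeriod_dvd
  -- value of itN on the orbit
  have hval : ∀ x : X, ∀ i < c x, itN (⇑f) k x (f^[i] x) = k / c x := by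
    intro x i hi
    have h1 : (Finset.range k).filter (fun j => f^[j] x = f^[i] x)
        = (Finset.range (k / c x)).image (fun m => m * c x + i) := by
      ext j
      simp only [Finset.mem_filter, Finset.mem_range, Finset.mem_image]
      constructor
      · rintro ⟨hjk, hj⟩
        have hmod : f^[j % c x] x = f^[i] x := by
          rw [Function.iterate_mod_minimalPeriod_eq]; exact hj
        have hji : j % c x = i :=
          Function.iterate_injOn_Iio_minimalPeriod
            (Nat.mod_lt j (hcpos x)) hi hmod
        refine ⟨j / c x, Nat.div_lt_div_of_lt_of_dvd (hcdvd x) hjk, ?_⟩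
        have hdm := Nat.div_add_mod j (c x)
        rw [Nat.mul_comm] at hdm
        omega
      · rintro ⟨m, hm, rfl⟩
        have hlt : m * c x + i < k := by
          have h2 : (m + 1) * c x ≤ (k / c x) * c x :=
            Nat.mul_le_mul_right _ hm
          rw [Nat.div_mul_cancel (hcdvd x)] at h2
          calc m * c x + i < m * c x + c x := by omega
            _ = (m + 1) * c x := by ring
            _ ≤ k := h2
        refine ⟨hlt, ?_⟩
        have : f^[m * c x + i] x = f^[i] (f^[m * c x] x) := by
          rw [add_comm, Function.iterate_add_apply]
        have hp : f^[m * c x] x = x := by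
          rw [Nat.mul_comm]
          exact (Function.isPeriodicPt_minimalPeriod (⇑f) x).mul_const m
        rw [this, hp]
    rw [itN, h1, Finset.card_image_of_injective _ (fun a b hab =>
      Nat.eq_of_mul_eq_mul_right (hcpos x) (Nat.add_right_cancel hab)),
      Finset.card_range]
  -- itN vanishes off the orbit
  have horb : ∀ x y : X, y ∉ (Finset.range (c x)).image (fun i => f^[i] x) →
      itN (⇑f) k x y = 0 := by
    intro x y hy
    rw [itN, Finset.card_eq_zero, Finset.filter_eq_empty_iff]
    intro j _ hj
    exact hy (Finset.mem_image.mpr ⟨j % c x, Finset.mem_range.mpr (Nat.mod_lt j (hcpos x)),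
      by rw [Function.iterate_mod_minimalPeriod_eq]; exact hj⟩)
  -- inner sum
  have hinner : ∀ x : X,
      ∑ y : X, (itN (⇑f) k x y : ℝ) * Real.logb 2 ((k : ℝ) / (itN (⇑f) k x y : ℝ))
        = (k : ℝ) * Real.logb 2 (c x) := by
    intro x
    rw [← Finset.sum_subset (Finset.subset_univ
        ((Finset.range (c x)).image (fun i => f^[i] x)))
      (by intro y _ hy; rw [horb x y hy]; simp)]
    rw [Finset.sum_image (by
      intro a ha b hb hab
      exact Function.iterate_injOn_Iio_minimalPeriod
        (Finset.mem_range.mp ha) (Finset.mem_range.mp hb) hab)]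
    have hkc : ((k / c x : ℕ) : ℝ) = (k : ℝ) / (c x : ℝ) :=
      Nat.cast_div (hcdvd x) (Nat.cast_ne_zero.mpr (hcpos x).ne')
    have hk0 : (k : ℝ) ≠ 0 := Nat.cast_ne_zero.mpr hk.ne'
    have hc0 : ((c x : ℕ) : ℝ) ≠ 0 := Nat.cast_ne_zero.mpr (hcpos x).ne'
    have hck : (k : ℝ) / ((k : ℝ) / (c x : ℝ)) = (c x : ℝ) := by
      field_simp
    have hterm : ∀ i ∈ Finset.range (c x),
        (itN (⇑f) k x (f^[i] x) : ℝ) *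
          Real.logb 2 ((k : ℝ) / (itN (⇑f) k x (f^[i] x) : ℝ))
          = ((k : ℝ) / (c x : ℝ)) * Real.logb 2 (c x) := by
      intro i hi
      rw [hval x i (Finset.mem_range.mp hi), hkc, hck]
    rw [Finset.sum_congr rfl hterm, Finset.sum_const, Finset.card_range,
      nsmul_eq_mul]
    field_simp
  -- conclude
  have hsum : ∑ x : X, ∑ y : X,
      (itN (⇑f) k x y : ℝ) * Real.logb 2 ((k : ℝ) / (itN (⇑f) k x y : ℝ))
      = (k : ℝ) * ∑ x : X, Real.logb 2 (c x) := by
    rw [Finset.mul_sum]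
    exact Finset.sum_congr rfl (fun x _ => hinner x)
  rw [itH, hsum]
  have hk0 : (k : ℝ) ≠ 0 := Nat.cast_ne_zero.mpr hk.ne'
  have hn0 : (Fintype.card X : ℝ) ≠ 0 := Nat.cast_ne_zero.mpr hn.ne'
  field_simp
  ring
end

section
/- For any function f on a finite set with n elements and any integer k with k ≥ 4n and k ≥ 77, we have |H_{f,k} − H_{f,∞}| ≤ 4n·log₂(k)/k. -/
open scoped Classical

/-- The asymptotic iteration entropy `H_{f,∞} = (1/n) ∑_i t_i log₂ c_i`:
each point `x` of a component with cycle length `c` contributes `log₂ c / n`,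
and the cycle length of the component of `x` is the minimal period of the
eventually-periodic point `f^[n] x`. -/
noncomputable def itHinf (X : Type*) [Fintype X] (f : X → X) : ℝ :=
  (1 / (Fintype.card X : ℝ)) *
    ∑ x : X, Real.logb 2 (Function.minimalPeriod f (f^[Fintype.card X] x))

/-!
The orbit of `x` is a tail of `t = preperiod f x ≤ n` distinct points followed by a cycle of
length `c ≤ n`. Among the first `k` iterates each tail point occurs once and each cycle point
`⌊(k - t) / c⌋` or `⌊(k - t) / c⌋ + 1` times, so `c * N_{f,k}(x, y)` is within `2n` of `k` on the
cycle. Writing `∑_y N log₂ (k / N)` as `∑_{j < k} log₂ (k / N(x, f^j x))`, each of the `t` tail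
terms is within `log₂ k` of `log₂ c` and each cycle term within `6n / k` (from
`|log a - log b| ≤ 2 |a - b| / b` for `a ≥ b / 2`). Hence the entropy at `x` is within
`(n log₂ k + 6n) / k ≤ 4n log₂ k / k` of `log₂ c` as soon as `k ≥ 4`, and averaging over `x`
gives the theorem.
-/

open Function Finset Real

theorem Nat.mul_count_modEq_bounds {c : ℕ} (hc : 0 < c) (K v : ℕ) :
    c * Nat.count (· ≡ v [MOD c]) K ≤ K + c ∧ K < c * Nat.count (· ≡ v [MOD c]) K + c := by
  rw [Nat.count_modEq_card K hc v]
  have := Nat.div_add_mod K c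
  have := Nat.mod_lt K hc
  split_ifs <;> simp only [mul_add, mul_one, add_zero] <;> omega

theorem Real.abs_log_sub_log_le {a b : ℝ} (hb : 0 < b) (hab : b / 2 ≤ a) :
    |log a - log b| ≤ 2 * |a - b| / b := by
  have ha : 0 < a := by linarith
  have hup : log a - log b ≤ (a - b) / b := by
    rw [← log_div ha.ne' hb.ne']
    linarith [log_le_sub_one_of_pos (div_pos ha hb), show a / b - 1 = (a - b) / b by field_simp]
  have hdown : log b - log a ≤ (b - a) / a := by
    rw [← log_div hb.ne' ha.ne']
    linarith [log_le_sub_one_of_pos (div_pos hb ha), show b / a - 1 = (b - a) / a by field_simp]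
  have h1 : (a - b) / b ≤ 2 * |a - b| / b := by
    gcongr; linarith [le_abs_self (a - b), abs_nonneg (a - b)]
  have h2 : (b - a) / a ≤ 2 * |a - b| / b := by
    rw [div_le_div_iff₀ ha hb]
    nlinarith [neg_abs_le (a - b), abs_nonneg (a - b)]
  rw [abs_le]
  constructor <;> linarith

theorem Real.abs_logb_div_sub_logb_le {k n c N : ℝ} (hn : 0 < n) (hk : 4 * n ≤ k) (hc : 0 < c)
    (hcN : |c * N - k| ≤ 2 * n) : |logb 2 (k / N) - logb 2 c| ≤ 6 * n / k := by
  have hk0 : 0 < k := by linarith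
  have hcN_pos : k / 2 ≤ c * N := by linarith [neg_abs_le (c * N - k)]
  have hN : 0 < N := pos_of_mul_pos_right (by linarith) hc.le
  have hlog2 : 2 / 3 < log 2 := by linarith [log_two_gt_d9]
  have heq : logb 2 (k / N) - logb 2 c = -((log (c * N) - log k) / log 2) := by
    rw [logb, logb, log_div hk0.ne' hN.ne', log_mul hc.ne' hN.ne']
    ring
  rw [heq, abs_neg, abs_div, abs_of_pos (by linarith : (0 : ℝ) < log 2), div_le_iff₀ (by linarith)]
  calc |log (c * N) - log k| ≤ 2 * |c * N - k| / k := abs_log_sub_log_le hk0 hcN_pos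
    _ ≤ 2 * (2 * n) / k := by gcongr
    _ ≤ 6 * n / k * log 2 := by
      rw [div_mul_eq_mul_div]
      exact div_le_div_of_nonneg_right (by nlinarith) hk0.le

theorem Finset.abs_sum_le_card_mul {ι : Type*} (s : Finset ι) {g : ι → ℝ} {b : ℝ}
    (h : ∀ i ∈ s, |g i| ≤ b) : |∑ i ∈ s, g i| ≤ #s * b := by
  simpa using (abs_sum_le_sum_abs _ _).trans (sum_le_card_nsmul s _ b h)

theorem abs_mul_sum_sub_mul_sum_le {ι : Type*} [Fintype ι] {a b : ι → ℝ} {ε : ℝ} (hε : 0 ≤ ε)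
    (h : ∀ i, |a i - b i| ≤ ε) :
    |1 / (Fintype.card ι : ℝ) * ∑ i, a i - 1 / (Fintype.card ι : ℝ) * ∑ i, b i| ≤ ε := by
  rw [← mul_sub, ← sum_sub_distrib, abs_mul, abs_of_nonneg (by positivity)]
  have hsum := abs_sum_le_card_mul univ fun i _ => h i
  rw [card_univ] at hsum
  rcases eq_or_ne (Fintype.card ι) 0 with h0 | h0
  · simpa [h0] using hε
  · calc 1 / (Fintype.card ι : ℝ) * |∑ i, (a i - b i)|
          ≤ 1 / Fintype.card ι * (Fintype.card ι * ε) := by gcongr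
      _ = ε := by field_simp

namespace Function

variable {X : Type*} {f : X → X} {x : X}

theorem mem_periodicPts_of_iterate_eq {a b : ℕ} (hab : a < b) (h : f^[a] x = f^[b] x) :
    f^[a] x ∈ periodicPts f :=
  mk_mem_periodicPts (Nat.sub_pos_of_lt hab) <| by
    rw [IsPeriodicPt, IsFixedPt, ← iterate_add_apply, Nat.sub_add_cancel hab.le, h]

theorem iterate_eq_iterate_iff_modEq {y : X} (hy : y ∈ periodicPts f) {m n : ℕ} :
    f^[m] y = f^[n] y ↔ m ≡ n [MOD minimalPeriod f y] := by
  have hpos := minimalPeriod_pos_of_mem_periodicPts hy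
  rw [← iterate_mod_minimalPeriod_eq (n := m), ← iterate_mod_minimalPeriod_eq (n := n),
    iterate_eq_iterate_iff_of_lt_minimalPeriod (Nat.mod_lt _ hpos) (Nat.mod_lt _ hpos)]
  rfl

variable [Fintype X]

theorem iterate_card_mem_periodicPts (f : X → X) (x : X) :
    f^[Fintype.card X] x ∈ periodicPts f := by
  have hmaps : ∀ j ∈ range (Fintype.card X + 1), f^[j] x ∈ (univ : Finset X) :=
    fun _ _ => mem_univ _
  obtain ⟨a, ha, b, hb, hne, heq⟩ := exists_ne_map_eq_of_card_lt_of_maps_to (by simp) hmaps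
  have of_lt : ∀ {i j}, i < j → j ∈ range (Fintype.card X + 1) → f^[i] x = f^[j] x →
      f^[Fintype.card X] x ∈ periodicPts f := fun {i j} hij hj h => by
    rw [← Nat.sub_add_cancel (show i ≤ Fintype.card X by rw [mem_range] at hj; omega),
      iterate_add_apply]
    exact (bijOn_periodicPts f).mapsTo.iterate _ (mem_periodicPts_of_iterate_eq hij h)
  rcases lt_or_gt_of_ne hne with h | h
  exacts [of_lt h hb heq, of_lt h ha heq.symm]

variable (f x) in
noncomputable def preperiod : ℕ :=
  Nat.find (⟨_, iterate_card_mem_periodicPts f x⟩ : ∃ j, f^[j] x ∈ periodicPts f)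

variable (f x) in
noncomputable def cycleLength : ℕ :=
  minimalPeriod f (f^[preperiod f x] x)

theorem iterate_preperiod_mem_periodicPts : f^[preperiod f x] x ∈ periodicPts f :=
  Nat.find_spec (p := fun j => f^[j] x ∈ periodicPts f) _

theorem preperiod_le_card : preperiod f x ≤ Fintype.card X :=
  Nat.find_min' _ (iterate_card_mem_periodicPts f x)

theorem iterate_mem_periodicPts_iff {j : ℕ} : f^[j] x ∈ periodicPts f ↔ preperiod f x ≤ j := by
  refine ⟨fun h => Nat.find_min' _ h, fun h => ?_⟩
  rw [← Nat.sub_add_cancel h, iterate_add_apply]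
  exact (bijOn_periodicPts f).mapsTo.iterate _ iterate_preperiod_mem_periodicPts

theorem eq_of_iterate_eq_of_lt_preperiod {i j : ℕ} (h : f^[i] x = f^[j] x)
    (hj : j < preperiod f x) : i = j := by
  rcases lt_trichotomy i j with hij | rfl | hij
  · have := iterate_mem_periodicPts_iff.mp (mem_periodicPts_of_iterate_eq hij h)
    omega
  · rfl
  · have := iterate_mem_periodicPts_iff.mp (mem_periodicPts_of_iterate_eq hij h.symm)
    omega

theorem cycleLength_pos : 0 < cycleLength f x :=
  minimalPeriod_pos_of_mem_periodicPts iterate_preperiod_mem_periodicPts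

theorem cycleLength_le_card : cycleLength f x ≤ Fintype.card X :=
  minimalPeriod_le_card

theorem minimalPeriod_iterate_of_preperiod_le {j : ℕ} (hj : preperiod f x ≤ j) :
    minimalPeriod f (f^[j] x) = cycleLength f x := by
  rw [← Nat.sub_add_cancel hj, iterate_add_apply,
    minimalPeriod_apply_iterate iterate_preperiod_mem_periodicPts, cycleLength]

end Function

section Entropy

variable {X : Type*} [Fintype X] {f : X → X} {k : ℕ} {x : X}

variable (f k) in
noncomputable def itHAt (x : X) : ℝ :=
  (∑ y, (itN f k x y : ℝ) * logb 2 (k / itN f k x y)) / k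

variable (f k x) in
theorem sum_itN_mul_eq_sum_range (g : ℕ → ℝ) :
    ∑ y, (itN f k x y : ℝ) * g (itN f k x y) = ∑ j ∈ range k, g (itN f k x (f^[j] x)) := by
  rw [← sum_fiberwise_of_maps_to (t := univ) (g := fun j => f^[j] x) fun _ _ => mem_univ _]
  refine sum_congr rfl fun y _ => ?_
  rw [sum_congr rfl fun j hj => by rw [(mem_filter.mp hj).2], sum_const, nsmul_eq_mul]
  rfl

theorem itN_iterate_of_lt_preperiod {j : ℕ} (hj : j < preperiod f x) (hjk : j < k) :
    itN f k x (f^[j] x) = 1 := by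
  rw [itN, card_eq_one]
  refine ⟨j, ext fun i => ?_⟩
  simp only [mem_filter, mem_range, mem_singleton]
  exact ⟨fun h => eq_of_iterate_eq_of_lt_preperiod h.2 hj, fun h => ⟨h ▸ hjk, h ▸ rfl⟩⟩

theorem itN_iterate_preperiod_add (hk : preperiod f x ≤ k) (m : ℕ) :
    itN f k x (f^[preperiod f x + m] x) =
      Nat.count (· ≡ m [MOD cycleLength f x]) (k - preperiod f x) := by
  set t := preperiod f x
  have htail : Nat.count (fun j => f^[j] x = f^[t + m] x) t = 0 :=
    Nat.count_of_forall_not fun j hj h => by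
      have := eq_of_iterate_eq_of_lt_preperiod h.symm hj
      omega
  rw [itN, ← Nat.count_eq_card_filter_range, ← Nat.add_sub_cancel' hk, Nat.count_add, htail,
    zero_add, Nat.add_sub_cancel_left]
  congr 1
  funext j
  rw [add_comm t, add_comm t, iterate_add_apply, iterate_add_apply,
    iterate_eq_iterate_iff_modEq iterate_preperiod_mem_periodicPts, cycleLength]

theorem abs_logb_div_itN_iterate_sub_le_of_lt_preperiod {j : ℕ} (hj : j < preperiod f x)
    (hk : Fintype.card X ≤ k) :
    |logb 2 (k / itN f k x (f^[j] x)) - logb 2 (cycleLength f x)| ≤ logb 2 k := by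
  have hc : 0 < cycleLength f x := cycleLength_pos
  have hck : cycleLength f x ≤ k := cycleLength_le_card.trans hk
  have hjk : j < k := by linarith [preperiod_le_card (f := f) (x := x)]
  have hlogc : 0 ≤ logb 2 (cycleLength f x) := logb_nonneg one_lt_two (by exact_mod_cast hc)
  have hlogck : logb 2 (cycleLength f x) ≤ logb 2 k :=
    logb_le_logb_of_le one_lt_two (by exact_mod_cast hc) (by exact_mod_cast hck)
  rw [itN_iterate_of_lt_preperiod hj hjk, Nat.cast_one, div_one, abs_le]
  constructor <;> linarith

theorem abs_logb_div_itN_iterate_preperiod_add_sub_le (hk : 4 * Fintype.card X ≤ k) (m : ℕ) :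
    |logb 2 (k / itN f k x (f^[preperiod f x + m] x)) - logb 2 (cycleLength f x)|
      ≤ 6 * Fintype.card X / k := by
  have hn : 0 < Fintype.card X := Fintype.card_pos_iff.mpr ⟨x⟩
  have ht : preperiod f x ≤ Fintype.card X := preperiod_le_card
  have hc : cycleLength f x ≤ Fintype.card X := cycleLength_le_card
  obtain ⟨hupper, hlower⟩ := Nat.mul_count_modEq_bounds (cycleLength_pos (f := f) (x := x))
    (k - preperiod f x) m
  rw [← itN_iterate_preperiod_add (by omega)] at hupper hlower
  set N := itN f k x (f^[preperiod f x + m] x)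
  have h₁ : (cycleLength f x * N : ℝ) ≤ k + 2 * Fintype.card X := by
    exact_mod_cast (by omega : cycleLength f x * N ≤ k + 2 * Fintype.card X)
  have h₂ : (k : ℝ) ≤ cycleLength f x * N + 2 * Fintype.card X := by
    exact_mod_cast (by omega : k ≤ cycleLength f x * N + 2 * Fintype.card X)
  exact abs_logb_div_sub_logb_le (by exact_mod_cast hn) (by exact_mod_cast hk)
    (by exact_mod_cast cycleLength_pos) (abs_sub_le_iff.mpr ⟨by linarith, by linarith⟩)

theorem abs_sum_range_logb_div_itN_sub_le (hk : 4 * Fintype.card X ≤ k) (x : X) :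
    |∑ j ∈ range k, (logb 2 (k / itN f k x (f^[j] x)) - logb 2 (cycleLength f x))|
      ≤ 4 * Fintype.card X * logb 2 k := by
  have hn : 0 < Fintype.card X := Fintype.card_pos_iff.mpr ⟨x⟩
  have ht : preperiod f x ≤ Fintype.card X := preperiod_le_card
  have hk0 : (0 : ℝ) < k := by exact_mod_cast (by omega : 0 < k)
  have hlogk : 2 ≤ logb 2 k := by
    rw [le_logb_iff_rpow_le one_lt_two hk0]
    norm_num
    exact_mod_cast (by omega : 4 ≤ k)
  have hsplit := sum_range_add
    (fun j => logb 2 (k / itN f k x (f^[j] x)) - logb 2 (cycleLength f x))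
    (preperiod f x) (k - preperiod f x)
  rw [Nat.add_sub_cancel' (by omega)] at hsplit
  have htail := abs_sum_le_card_mul (range (preperiod f x)) fun j hj =>
    abs_logb_div_itN_iterate_sub_le_of_lt_preperiod (k := k) (mem_range.mp hj) (by omega)
  have hcycle := abs_sum_le_card_mul (range (k - preperiod f x)) fun m _ =>
    abs_logb_div_itN_iterate_preperiod_add_sub_le (f := f) (x := x) hk m
  rw [card_range] at htail hcycle
  rw [hsplit]
  calc _ ≤ _ := abs_add_le _ _
    _ ≤ _ := add_le_add htail hcycle
    _ ≤ Fintype.card X * logb 2 k + k * (6 * Fintype.card X / k) := by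
      gcongr
      exact_mod_cast Nat.sub_le _ _
    _ = Fintype.card X * logb 2 k + 6 * Fintype.card X := by field_simp
    _ ≤ 4 * Fintype.card X * logb 2 k := by
      have : (1 : ℝ) ≤ Fintype.card X := by exact_mod_cast hn
      nlinarith

theorem itH_eq_mul_sum_itHAt : itH X f k = 1 / (Fintype.card X : ℝ) * ∑ x, itHAt f k x := by
  simp only [itH, itHAt]
  rw [← sum_div]
  ring

theorem abs_itHAt_sub_logb_cycleLength_le (hk : 4 * Fintype.card X ≤ k) (x : X) :
    |itHAt f k x - logb 2 (cycleLength f x)| ≤ 4 * Fintype.card X * logb 2 k / k := by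
  have hk0 : (0 : ℝ) < k := by
    exact_mod_cast (by linarith [Fintype.card_pos_iff.mpr ⟨x⟩] : 0 < k)
  have hsum : itHAt f k x - logb 2 (cycleLength f x)
      = (∑ j ∈ range k, (logb 2 (k / itN f k x (f^[j] x)) - logb 2 (cycleLength f x))) / k := by
    rw [itHAt, sum_itN_mul_eq_sum_range f k x fun N => logb 2 (k / N), sum_sub_distrib,
      sum_const, card_range, nsmul_eq_mul]
    field_simp
  rw [hsum, abs_div, abs_of_pos hk0]
  exact div_le_div_of_nonneg_right (abs_sum_range_logb_div_itN_sub_le hk x) hk0.le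

end Entropy

theorem itH_close_to_itHinf_general {X : Type*} [Fintype X] (f : X → X) (k : ℕ)
    (hk4n : 4 * Fintype.card X ≤ k) :
    |itH X f k - itHinf X f| ≤ 4 * (Fintype.card X : ℝ) * Real.logb 2 k / k := by
  have hlogk : 0 ≤ logb 2 k := div_nonneg (log_natCast_nonneg k) (log_nonneg one_le_two)
  rw [itH_eq_mul_sum_itHAt, itHinf]
  refine abs_mul_sum_sub_mul_sum_le (by positivity) fun x => ?_
  rw [minimalPeriod_iterate_of_preperiod_le preperiod_le_card]
  exact abs_itHAt_sub_logb_cycleLength_le hk4n x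

theorem itH_close_to_itHinf {X : Type*} [Fintype X] (f : X → X) (k : ℕ)
    (hk4n : 4 * Fintype.card X ≤ k) (hk77 : 77 ≤ k) :
    |itH X f k - itHinf X f| ≤ 4 * (Fintype.card X : ℝ) * Real.logb 2 k / k :=
  itH_close_to_itHinf_general f k hk4n
end

section
/- Let t = (t₁,…,t_s), c = (c₁,…,c_s) and t′ = (t′₁,…,t′_r), c′ = (c′₁,…,c′_r) be sequences of positive integers with r < s, Σ t_i = Σ t′_j = n, c_i ≤ t_i and c′_j ≤ t′_j for all indices. Suppose there exist pairwise disjoint sets S₁,…,S_r ⊆ {1,…,s} with t′_j = Σ_{i ∈ S_j} t_i and c′_j = Σ_{i ∈ S_j} c_i for all j, and at least one S_j has more than one element. Then (1/n) Σ_{i=1}^{s} t_i log₂ c_i < (1/n) Σ_{j=1}^{r} t′_j log₂ c′_j; i.e., amalgamating components strictly increases the asymptotic iteration entropy. -/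
open scoped Classical

/-!
The blocks `S j` cover `{1,…,s}`: they carry the total mass `n` and every `tᵢ` is positive. Inside a
block, `cᵢ ≤ c′ⱼ` gives `tᵢ log cᵢ ≤ tᵢ log c′ⱼ`, and summing over the block gives `t′ⱼ log c′ⱼ`.
In a block with at least two elements every `cᵢ` is strictly below `c′ⱼ`, so the inequality is strict there.
-/

open Finset Real

theorem Finset.eq_univ_of_sum_eq_sum_univ {ι M : Type*} [Fintype ι] [AddCommMonoid M]
    [PartialOrder M] [IsOrderedCancelAddMonoid M] {f : ι → M} (hf : ∀ i, 0 < f i)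
    {A : Finset ι} (h : ∑ i ∈ A, f i = ∑ i, f i) : A = univ := by
  refine eq_univ_iff_forall.mpr fun i => by_contra fun hi => ?_
  exact (sum_lt_sum_of_subset (subset_univ A) (mem_univ i) hi (hf i)
    fun j _ _ => (hf j).le).ne h

section BlockEntropy

variable {ι : Type*} {b : ℝ} {A : Finset ι} {t c : ι → ℝ}

theorem sum_mul_logb_le_sum_mul_logb_sum (hb : 1 < b) (ht : ∀ i ∈ A, 0 ≤ t i)
    (hc : ∀ i ∈ A, 0 < c i) :
    ∑ i ∈ A, t i * logb b (c i) ≤ (∑ i ∈ A, t i) * logb b (∑ i ∈ A, c i) := by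
  rw [sum_mul]
  refine sum_le_sum fun i hi => mul_le_mul_of_nonneg_left ?_ (ht i hi)
  exact logb_le_logb_of_le hb (hc i hi) (single_le_sum (fun j hj => (hc j hj).le) hi)

theorem sum_mul_logb_lt_sum_mul_logb_sum (hb : 1 < b) (hA : 1 < #A) (ht : ∀ i ∈ A, 0 < t i)
    (hc : ∀ i ∈ A, 0 < c i) :
    ∑ i ∈ A, t i * logb b (c i) < (∑ i ∈ A, t i) * logb b (∑ i ∈ A, c i) := by
  rw [sum_mul]
  refine sum_lt_sum_of_nonempty (card_pos.mp (by omega)) fun i hi => ?_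
  obtain ⟨j, hj, hji⟩ := exists_mem_ne hA i
  have hci : c i < ∑ k ∈ A, c k :=
    single_lt_sum hji hi hj (hc j hj) fun k hk _ => (hc k hk).le
  exact mul_lt_mul_of_pos_left (logb_lt_logb hb (hc i hi) hci) (ht i hi)

end BlockEntropy

theorem amalgamation_increases_entropy_general (s r n : ℕ)
    (t c : Fin s → ℕ) (t' c' : Fin r → ℕ)
    (ht : ∀ i, 1 ≤ t i) (hc : ∀ i, 1 ≤ c i)
    (hsum : ∑ i, t i = n) (hsum' : ∑ j, t' j = n)
    (S : Fin r → Finset (Fin s))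
    (hdisj : ∀ j₁ j₂, j₁ ≠ j₂ → Disjoint (S j₁) (S j₂))
    (hts : ∀ j, t' j = ∑ i ∈ S j, t i) (hcs : ∀ j, c' j = ∑ i ∈ S j, c i)
    (hbig : ∃ j, 1 < (S j).card) :
    (1 / (n : ℝ)) * ∑ i, (t i : ℝ) * Real.logb 2 (c i) <
      (1 / (n : ℝ)) * ∑ j, (t' j : ℝ) * Real.logb 2 (c' j) := by
  have hdisj' : ((univ : Finset (Fin r)) : Set (Fin r)).PairwiseDisjoint S :=
    fun j₁ _ j₂ _ => hdisj j₁ j₂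
  have hcover : univ.biUnion S = univ :=
    eq_univ_of_sum_eq_sum_univ (f := t) ht <| by
      rw [sum_biUnion hdisj', hsum, ← hsum']
      exact sum_congr rfl fun j _ => (hts j).symm
  have ht₀ : ∀ i, (0 : ℝ) < t i := fun i => by exact_mod_cast ht i
  have hc₀ : ∀ i, (0 : ℝ) < c i := fun i => by exact_mod_cast hc i
  obtain ⟨j₀, hj₀⟩ := hbig
  have key : ∑ j, ∑ i ∈ S j, (t i : ℝ) * logb 2 (c i) < ∑ j, (t' j : ℝ) * logb 2 (c' j) := by
    refine sum_lt_sum (fun j _ => ?_) ⟨j₀, mem_univ j₀, ?_⟩ <;>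
      simp only [hts, hcs, Nat.cast_sum]
    · exact sum_mul_logb_le_sum_mul_logb_sum one_lt_two
        (fun i _ => (ht₀ i).le) fun i _ => hc₀ i
    · exact sum_mul_logb_lt_sum_mul_logb_sum one_lt_two hj₀
        (fun i _ => ht₀ i) fun i _ => hc₀ i
  obtain ⟨i₀, -⟩ := card_pos.mp (by omega : 0 < (S j₀).card)
  have hn : (0 : ℝ) < n := by
    rw [← hsum, Nat.cast_sum]
    exact sum_pos (fun i _ => ht₀ i) ⟨i₀, mem_univ i₀⟩
  rw [← sum_biUnion hdisj', hcover] at key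
  exact mul_lt_mul_of_pos_left key (by positivity)

theorem amalgamation_increases_entropy (s r n : ℕ) (hrs : r < s)
    (t c : Fin s → ℕ) (t' c' : Fin r → ℕ)
    (ht : ∀ i, 1 ≤ t i) (hc : ∀ i, 1 ≤ c i) (hct : ∀ i, c i ≤ t i)
    (ht' : ∀ j, 1 ≤ t' j) (hc' : ∀ j, 1 ≤ c' j) (hct' : ∀ j, c' j ≤ t' j)
    (hsum : ∑ i, t i = n) (hsum' : ∑ j, t' j = n)
    (S : Fin r → Finset (Fin s))
    (hdisj : ∀ j₁ j₂, j₁ ≠ j₂ → Disjoint (S j₁) (S j₂))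
    (hts : ∀ j, t' j = ∑ i ∈ S j, t i) (hcs : ∀ j, c' j = ∑ i ∈ S j, c i)
    (hbig : ∃ j, 1 < (S j).card) :
    (1 / (n : ℝ)) * ∑ i, (t i : ℝ) * Real.logb 2 (c i) <
      (1 / (n : ℝ)) * ∑ j, (t' j : ℝ) * Real.logb 2 (c' j) :=
  amalgamation_increases_entropy_general s r n t c t' c' ht hc hsum hsum' S hdisj hts hcs hbig
end
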